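/- Let X be a finite group and i ∈ X an involution. For x ∈ X such that w_x = i·i^x has odd order m_x, set ζ₁(x) := w_x^{(m_x+1)/2}·x^{-1} (an element of C_X(i)). Then for every c ∈ C_X(i), the number of elements x ∈ X with w_x of odd order and ζ₁(x) = c equals the number of elements x ∈ X with w_x of odd order and ζ₁(x) = 1; that is, as x ranges uniformly over the set {x ∈ X : i·i^x has odd order}, the value ζ₁(x) is uniformly distributed over C_X(i). -/

import Mathlib

/-!
Right multiplication by an element `c` centralising `i` conjugates `w_x = i·i^x` by `c`,
so it preserves the order of `w_x` and sends `ζ₁(x)` to `c⁻¹·ζ₁(x)`. Hence `x ↦ x·c` is a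
bijection from the fibre of `ζ₁` over `c` onto the fibre over `1`.
-/

namespace Zeta1

variable {X : Type*} [Group X]

def mulConj (i x : X) : X := i * (x⁻¹ * i * x)

noncomputable def oddSqrt (w : X) : X := w ^ ((orderOf w + 1) / 2)

noncomputable def zeta1 (i x : X) : X := oddSqrt (mulConj i x) * x⁻¹

lemma orderOf_inv_mul_mul (c w : X) : orderOf (c⁻¹ * w * c) = orderOf w :=
  SemiconjBy.orderOf_eq c (by simp [SemiconjBy, mul_assoc])

lemma oddSqrt_inv_mul_mul (c w : X) : oddSqrt (c⁻¹ * w * c) = c⁻¹ * oddSqrt w * c := by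
  simpa [oddSqrt, orderOf_inv_mul_mul] using conj_pow (a := c⁻¹) (b := w)

lemma mulConj_mul_right {i c : X} (hic : Commute i c) (x : X) :
    mulConj i (x * c) = c⁻¹ * mulConj i x * c := by
  apply mul_left_cancel (a := c)
  rw [mulConj, mulConj, ← mul_assoc, ← hic.eq]
  group

lemma zeta1_mul_right {i c : X} (hic : Commute i c) (x : X) :
    zeta1 i (x * c) = c⁻¹ * zeta1 i x := by
  rw [zeta1, zeta1, mulConj_mul_right hic, oddSqrt_inv_mul_mul]
  group

lemma ncard_fiber_eq_of_mul_right {P : X → Prop} {f : X → X} {c : X}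
    (hP : ∀ x, P (x * c) ↔ P x) (hf : ∀ x, f (x * c) = c⁻¹ * f x) (d : X) :
    {x | P x ∧ f x = d}.ncard = {x | P x ∧ f x = c⁻¹ * d}.ncard := by
  have hpre : (· * c) ⁻¹' {x | P x ∧ f x = c⁻¹ * d} = {x | P x ∧ f x = d} := by
    ext x
    simp [hP, hf]
  rw [← hpre]
  exact Set.ncard_preimage_of_injective_subset_range (mul_left_injective c)
    ((mul_right_surjective c).range_eq ▸ Set.subset_univ _)

end Zeta1

open Zeta1 in
theorem zeta1_uniformly_distributed_general (X : Type*) [Group X] (i : X)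
    (c : X) (hc : c ∈ Subgroup.centralizer ({i} : Set X)) :
    Set.ncard {x : X | Odd (orderOf (i * (x⁻¹ * i * x))) ∧
        (i * (x⁻¹ * i * x)) ^ ((orderOf (i * (x⁻¹ * i * x)) + 1) / 2) * x⁻¹ = c} =
    Set.ncard {x : X | Odd (orderOf (i * (x⁻¹ * i * x))) ∧
        (i * (x⁻¹ * i * x)) ^ ((orderOf (i * (x⁻¹ * i * x)) + 1) / 2) * x⁻¹ = 1} := by
  have hic : Commute i c := (Subgroup.mem_centralizer_singleton_iff.mp hc).symm
  have key := ncard_fiber_eq_of_mul_right (P := fun x => Odd (orderOf (mulConj i x)))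
    (fun x => by rw [mulConj_mul_right hic, orderOf_inv_mul_mul]) (zeta1_mul_right hic) c
  rwa [inv_mul_cancel] at key

/-- Let `X` be a finite group and `i ∈ X` an involution.  For `x ∈ X`
with `w_x = i·i^x` of odd order `m_x`, set `ζ₁(x) = w_x^{(m_x+1)/2}·x⁻¹`.  Then for every
`c ∈ C_X(i)`, the number of `x ∈ X` with `w_x` of odd order and `ζ₁(x) = c` equals the
number of `x ∈ X` with `w_x` of odd order and `ζ₁(x) = 1`: i.e. `ζ₁` of a uniform random
element of `{x : i·i^x has odd order}` is uniformly distributed over `C_X(i)`. -/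
theorem zeta1_uniformly_distributed (X : Type*) [Group X] [Finite X] (i : X)
    (hi : orderOf i = 2) (c : X) (hc : c ∈ Subgroup.centralizer ({i} : Set X)) :
    Set.ncard {x : X | Odd (orderOf (i * (x⁻¹ * i * x))) ∧
        (i * (x⁻¹ * i * x)) ^ ((orderOf (i * (x⁻¹ * i * x)) + 1) / 2) * x⁻¹ = c} =
    Set.ncard {x : X | Odd (orderOf (i * (x⁻¹ * i * x))) ∧
        (i * (x⁻¹ * i * x)) ^ ((orderOf (i * (x⁻¹ * i * x)) + 1) / 2) * x⁻¹ = 1} :=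
  zeta1_uniformly_distributed_general X i c hc
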